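/- Let f ∈ ℂ[x_1,x_2] be a homogeneous polynomial of degree 3 such that H(f) = α·x_1x_2 for some nonzero α ∈ ℂ. Then f = α_1 x_1^3 + α_2 x_2^3 for some constants α_1, α_2 ∈ ℂ. -/

import Mathlib

/-!
Write `f = a x³ + b x²y + c xy² + d y³`. Its Hessian is
`(12ac - 4b²) x² + (36ad - 4bc) xy + (12bd - 4c²) y²`, so `H(f) = α xy` forces `b² = 3ac` and
`c² = 3bd`. Multiplying these gives `b²c² = 9abcd`, i.e. `bc (bc - 9ad) = 0`; as
`α = 4 (9ad - bc) ≠ 0`, we get `bc = 0`, and then both equations give `b = c = 0`.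
-/

open MvPolynomial

/-- The Hessian determinant of a multivariate polynomial. -/
noncomputable def hessDet {n : ℕ} (f : MvPolynomial (Fin n) ℂ) : MvPolynomial (Fin n) ℂ :=
  Matrix.det (Matrix.of fun i j => pderiv i (pderiv j f))

namespace Finsupp

lemma single_zero_add_single_one_eq_iff (m : Fin 2 →₀ ℕ) (p : ℕ × ℕ) :
    single 0 p.1 + single 1 p.2 = m ↔ p = (m 0, m 1) := by
  simp [Finsupp.ext_iff, Fin.forall_fin_two, Prod.ext_iff, eq_comm]

lemma degree_fin_two (m : Fin 2 →₀ ℕ) : m.degree = m 0 + m 1 := by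
  simp [degree_eq_sum, Fin.sum_univ_two]

end Finsupp

namespace MvPolynomial

open Finset

variable {R : Type*} [CommSemiring R]

lemma monomial_single_zero_add_single_one (i j : ℕ) (a : R) :
    monomial (Finsupp.single 0 i + Finsupp.single 1 j) a =
      (C a * X 0 ^ i * X 1 ^ j : MvPolynomial (Fin 2) R) := by
  rw [X_pow_eq_monomial, X_pow_eq_monomial, C_mul_monomial, monomial_mul, mul_one, mul_one]

theorem IsHomogeneous.eq_sum_antidiagonal {f : MvPolynomial (Fin 2) R} {n : ℕ}
    (hf : f.IsHomogeneous n) :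
    f = ∑ p ∈ antidiagonal n,
      C (coeff (Finsupp.single 0 p.1 + Finsupp.single 1 p.2) f) * X 0 ^ p.1 * X 1 ^ p.2 := by
  simp_rw [← monomial_single_zero_add_single_one]
  ext m
  simp only [coeff_sum, coeff_monomial, Finsupp.single_zero_add_single_one_eq_iff, sum_ite_eq',
    HasAntidiagonal.mem_antidiagonal]
  split_ifs with hm
  · rw [(Finsupp.single_zero_add_single_one_eq_iff m _).mpr rfl]
  · exact hf.coeff_eq_zero (by rwa [Finsupp.degree_fin_two])

noncomputable def binaryCubic (a b c d : R) : MvPolynomial (Fin 2) R :=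
  C a * X 0 ^ 3 + C b * (X 0 ^ 2 * X 1) + C c * (X 0 * X 1 ^ 2) + C d * X 1 ^ 3

theorem IsHomogeneous.exists_eq_binaryCubic {f : MvPolynomial (Fin 2) R}
    (hf : f.IsHomogeneous 3) : ∃ a b c d : R, f = binaryCubic a b c d := by
  refine ⟨coeff (Finsupp.single 0 3) f, coeff (Finsupp.single 0 2 + Finsupp.single 1 1) f,
    coeff (Finsupp.single 0 1 + Finsupp.single 1 2) f, coeff (Finsupp.single 1 3) f, ?_⟩
  conv_lhs => rw [hf.eq_sum_antidiagonal]
  simp only [Nat.sum_antidiagonal_succ, HasAntidiagonal.antidiagonal_zero, sum_singleton,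
    Finsupp.single_zero, zero_add, add_zero, binaryCubic]
  ring

lemma coeffs_eq_of_binaryQuadratic_eq {p q r s : R}
    (h : C p * X 0 ^ 2 + C q * (X 0 * X 1) + C r * X 1 ^ 2 =
      (C s * (X 0 * X 1) : MvPolynomial (Fin 2) R)) :
    p = 0 ∧ q = s ∧ r = 0 := by
  have h₁₀ := congrArg (eval ![1, 0]) h
  have h₀₁ := congrArg (eval ![0, 1]) h
  have h₁₁ := congrArg (eval ![1, 1]) h
  simp only [map_add, map_mul, map_pow, eval_C, eval_X, Matrix.cons_val_zero,
    Matrix.cons_val_one, one_pow, zero_pow two_ne_zero, mul_one, mul_zero,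
    add_zero, zero_add] at h₁₀ h₀₁ h₁₁
  exact ⟨h₁₀, by simpa [h₁₀, h₀₁] using h₁₁, h₀₁⟩

end MvPolynomial

lemma eq_zero_of_sq_eq_three_mul {R : Type*} [CommRing R] [IsDomain R] {a b c d : R}
    (hb : b ^ 2 = 3 * a * c) (hc : c ^ 2 = 3 * b * d) (h : b * c ≠ 9 * a * d) :
    b = 0 ∧ c = 0 := by
  have hbc : b * c * (b * c - 9 * a * d) = 0 := by linear_combination c ^ 2 * hb + 3 * a * c * hc
  rcases mul_eq_zero.mp ((mul_eq_zero.mp hbc).resolve_right (sub_ne_zero.mpr h)) with rfl | rfl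
  · exact ⟨rfl, pow_eq_zero_iff two_ne_zero |>.mp (by simpa using hc)⟩
  · exact ⟨pow_eq_zero_iff two_ne_zero |>.mp (by simpa using hb), rfl⟩

lemma hessDet_binaryCubic (a b c d : ℂ) :
    hessDet (binaryCubic a b c d) =
      C (12 * a * c - 4 * b ^ 2) * X 0 ^ 2 + C (36 * a * d - 4 * b * c) * (X 0 * X 1)
        + C (12 * b * d - 4 * c ^ 2) * X 1 ^ 2 := by
  simp only [hessDet, binaryCubic, Matrix.det_fin_two, Matrix.of_apply, map_add, pderiv_C,
    pderiv_pow, pderiv_mul, pderiv_X_self, pderiv_X_of_ne one_ne_zero, pderiv_X_of_ne zero_ne_one,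
    Derivation.map_natCast, map_zero, Derivation.map_one_eq_zero, C_sub, C_mul, C_pow, map_ofNat]
  ring

theorem binary_cubic_fermat (f : MvPolynomial (Fin 2) ℂ) (hf : f.IsHomogeneous 3)
    (α : ℂ) (hα : α ≠ 0) (hH : hessDet f = C α * (X 0 * X 1)) :
    ∃ α₁ α₂ : ℂ, f = C α₁ * X 0 ^ 3 + C α₂ * X 1 ^ 3 := by
  obtain ⟨a, b, c, d, rfl⟩ := hf.exists_eq_binaryCubic
  rw [hessDet_binaryCubic] at hH
  obtain ⟨hx, hxy, hy⟩ := coeffs_eq_of_binaryQuadratic_eq hH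
  obtain ⟨rfl, rfl⟩ := eq_zero_of_sq_eq_three_mul (a := a) (b := b) (c := c) (d := d)
    (by linear_combination (-1 / 4 : ℂ) * hx) (by linear_combination (-1 / 4 : ℂ) * hy)
    (fun h => hα (by linear_combination -hxy - 4 * h))
  exact ⟨a, d, by simp [binaryCubic]⟩
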